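/- Let ν > 0 be real and not an integer, put k_ν = ⌊ν/2 − 1/2⌋ and μ̃ = ν − 2k_ν − 2, and let B(μ̃,ν) = 2^{1−μ̃} Γ(ν/2 − μ̃/2 + 1/2) / (π Γ(ν/2 + μ̃/2 + 1/2)). Then for every z in the cut plane ℂ ∖ (−∞,0]: 𝐊_ν(z) = B(μ̃,ν) S_{μ̃,ν}(z) + p_ν(z). -/

import Mathlib

/-- Bessel function of the first kind,
`J_ν(z) = Σ_{k=0}^∞ (-1)^k (z/2)^(ν+2k) / (k! Γ(ν+k+1))` (principal powers). -/
noncomputable def besselJ (ν z : ℂ) : ℂ :=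
  ∑' k : ℕ, (-1 : ℂ) ^ k * (z / 2) ^ (ν + 2 * (k : ℂ)) /
    ((k.factorial : ℂ) * Complex.Gamma (ν + (k : ℂ) + 1))

/-- Bessel function of the second kind (noninteger order),
`Y_ν(z) = (J_ν(z) cos(νπ) - J_{-ν}(z)) / sin(νπ)`. -/
noncomputable def besselY (ν z : ℂ) : ℂ :=
  (besselJ ν z * Complex.cos (ν * (Real.pi : ℂ)) - besselJ (-ν) z) /
    Complex.sin (ν * (Real.pi : ℂ))

/-- `a_k(μ,ν) = Π_{m=1}^{k} ((μ+2m-1)² - ν²)`. -/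
noncomputable def lommelCoeff (μ ν : ℂ) (k : ℕ) : ℂ :=
  ∏ m ∈ Finset.range k, ((μ + 2 * ((m : ℂ) + 1) - 1) ^ 2 - ν ^ 2)

/-- The Lommel function `s_{μ,ν}(z) = z^(μ+1) Σ_{k=0}^∞ (-1)^k z^(2k) / a_{k+1}(μ,ν)`. -/
noncomputable def lommels (μ ν z : ℂ) : ℂ :=
  z ^ (μ + 1) * ∑' k : ℕ, (-1 : ℂ) ^ k * z ^ (2 * k) / lommelCoeff μ ν (k + 1)

/-- `A(μ,ν) = 2^(μ-1) Γ(μ/2+ν/2+1/2) Γ(μ/2-ν/2+1/2)`. -/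
noncomputable def lommelA (μ ν : ℂ) : ℂ :=
  (2 : ℂ) ^ (μ - 1) * Complex.Gamma (μ / 2 + ν / 2 + 1 / 2) *
    Complex.Gamma (μ / 2 - ν / 2 + 1 / 2)

/-- The Lommel function
`S_{μ,ν}(z) = s_{μ,ν}(z) + A(μ,ν){sin((μ-ν)π/2) J_ν(z) - cos((μ-ν)π/2) Y_ν(z)}`. -/
noncomputable def lommelS (μ ν z : ℂ) : ℂ :=
  lommels μ ν z + lommelA μ ν *
    (Complex.sin ((μ - ν) * (Real.pi : ℂ) / 2) * besselJ ν z -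
      Complex.cos ((μ - ν) * (Real.pi : ℂ) / 2) * besselY ν z)

/-- `S^(0)_{μ,ν}(z) = s_{μ,ν}(z) + A(μ,ν) sin((μ-ν)π/2) J_ν(z)`. -/
noncomputable def lommelS0 (μ ν z : ℂ) : ℂ :=
  lommels μ ν z + lommelA μ ν * Complex.sin ((μ - ν) * (Real.pi : ℂ) / 2) * besselJ ν z

/-- `S^(1)_{μ,ν}(z) = s_{μ,ν}(z) - i e^((μ-ν)πi/2) A(μ,ν) J_ν(z)`. -/
noncomputable def lommelS1 (μ ν z : ℂ) : ℂ :=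
  lommels μ ν z - Complex.I * Complex.exp ((μ - ν) * (Real.pi : ℂ) * Complex.I / 2) *
    lommelA μ ν * besselJ ν z

/-- `S^(2)_{μ,ν}(z) = s_{μ,ν}(z) + i e^((ν-μ)πi/2) A(μ,ν) J_ν(z)`. -/
noncomputable def lommelS2 (μ ν z : ℂ) : ℂ :=
  lommels μ ν z + Complex.I * Complex.exp ((ν - μ) * (Real.pi : ℂ) * Complex.I / 2) *
    lommelA μ ν * besselJ ν z

/-- The Struve function
`𝐇_ν(z) = (z/2)^(ν+1) Σ_{k=0}^∞ (-1)^k (z/2)^(2k)/(Γ(k+3/2) Γ(k+ν+3/2))`. -/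
noncomputable def struveH (ν z : ℂ) : ℂ :=
  (z / 2) ^ (ν + 1) * ∑' k : ℕ, (-1 : ℂ) ^ k * (z / 2) ^ (2 * k) /
    (Complex.Gamma ((k : ℂ) + 3 / 2) * Complex.Gamma ((k : ℂ) + ν + 3 / 2))

/-- `k_ν = ⌊ν/2 - 1/2⌋`. -/
noncomputable def kIdx (ν : ℝ) : ℤ := ⌊ν / 2 - 1 / 2⌋

/-- `μ̃ = ν - 2 k_ν - 2`, so `-1 ≤ μ̃ < 1`. -/
noncomputable def muTilde (ν : ℝ) : ℝ := ν - 2 * (kIdx ν : ℝ) - 2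

/-- `p_ν(z) = (1/π) Σ_{k=0}^{k_ν} Γ(k+1/2) (z/2)^(ν-2k-1) / Γ(ν+1/2-k)` (empty sum is `0`). -/
noncomputable def pStruve (ν : ℝ) (z : ℂ) : ℂ :=
  (1 / (Real.pi : ℂ)) * ∑ k ∈ Finset.range (kIdx ν + 1).toNat,
    Complex.Gamma ((k : ℂ) + 1 / 2) * (z / 2) ^ ((ν : ℂ) - 2 * (k : ℂ) - 1) /
      Complex.Gamma ((ν : ℂ) + 1 / 2 - (k : ℂ))

/-- `B(μ̃,ν) = 2^(1-μ̃) Γ(ν/2-μ̃/2+1/2) / (π Γ(ν/2+μ̃/2+1/2))`. -/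
noncomputable def Bcoef (ν : ℝ) : ℂ :=
  (2 : ℂ) ^ ((1 : ℂ) - (muTilde ν : ℂ)) *
    Complex.Gamma ((ν : ℂ) / 2 - (muTilde ν : ℂ) / 2 + 1 / 2) /
    ((Real.pi : ℂ) * Complex.Gamma ((ν : ℂ) / 2 + (muTilde ν : ℂ) / 2 + 1 / 2))

/-- `𝐊_ν(z) = 𝐇_ν(z) - Y_ν(z)`. -/
noncomputable def struveK (ν z : ℂ) : ℂ := struveH ν z - besselY ν z

open Complex Finset in
private lemma div_two_cpow {z : ℂ} (hz : z ≠ 0) (w : ℂ) : (z/2)^w = z^w / (2:ℂ)^w := by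
  have h2 : ((2⁻¹:ℝ):ℂ) ≠ 0 := by norm_num
  have hd : z/2 = ((2⁻¹:ℝ):ℂ) * z := by push_cast; ring
  rw [hd, cpow_def_of_ne_zero (mul_ne_zero h2 hz), log_ofReal_mul (by norm_num) hz,
    ofReal_log (by norm_num : (0:ℝ) ≤ 2⁻¹), add_mul, exp_add,
    ← cpow_def_of_ne_zero h2, ← cpow_def_of_ne_zero hz]
  rw [show ((2⁻¹:ℝ):ℂ) = (2:ℂ)⁻¹ by push_cast; ring, inv_cpow _ _ (by
    rw [show (2:ℂ) = ((2:ℕ):ℂ) by norm_num, natCast_arg]; exact Real.pi_ne_zero.symm)]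
  ring

private lemma cpow_two_eq {x : ℂ} : x ^ (2:ℂ) = x^2 := by
  rw [show (2:ℂ) = ((2:ℕ):ℂ) by norm_num, Complex.cpow_natCast]

private lemma lommelCoeff_succ (μ ν : ℂ) (k : ℕ) :
    lommelCoeff μ ν (k+1) = lommelCoeff μ ν k * ((μ + 2*((k:ℂ)+1) - 1)^2 - ν^2) :=
  Finset.prod_range_succ _ _

private lemma lommelCoeff_succ' (μ ν : ℂ) (k : ℕ) :
    lommelCoeff μ ν (k+1) = ((μ+1)^2 - ν^2) * lommelCoeff (μ+2) ν k := by
  unfold lommelCoeff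
  rw [Finset.prod_range_succ']
  rw [mul_comm]
  congr 1
  · push_cast; ring_nf
  · refine Finset.prod_congr rfl fun m _ => ?_
    push_cast; ring_nf
open Complex Finset in
private lemma summable_lommel {μ ν z : ℂ}
    (hfac : ∀ m : ℕ, (μ + 2*((m:ℂ)+1) - 1)^2 - ν^2 ≠ 0) :
    Summable (fun k : ℕ => (-1:ℂ)^k * z^(2*k) / lommelCoeff μ ν k) := by
  set f : ℕ → ℂ := fun k => (-1:ℂ)^k * z^(2*k) / lommelCoeff μ ν k with hf
  have hC : ∀ k, lommelCoeff μ ν k ≠ 0 := fun k =>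
    Finset.prod_ne_zero_iff.2 fun m _ => hfac m
  obtain ⟨N, hN⟩ := exists_nat_gt (‖μ‖ + ‖ν‖ + 2*‖z‖^2 + 1)
  refine summable_of_ratio_norm_eventually_le (r := 1/2) (by norm_num) ?_
  filter_upwards [Filter.eventually_ge_atTop N] with k hk
  set g : ℂ := (μ + 2*((k:ℂ)+1) - 1)^2 - ν^2 with hg
  have hkR : (‖μ‖ + ‖ν‖ + 2*‖z‖^2 + 1) ≤ (k:ℝ) := le_trans hN.le (by exact_mod_cast hk)
  -- norm bound on g
  have hd1 : ‖μ + 2*((k:ℂ)+1) - 1‖ ≥ 2*(k:ℝ)+1 - ‖μ‖ := by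
    have h1 : ‖((2*(k:ℝ)+1 : ℝ):ℂ)‖ - ‖-μ‖ ≤ ‖((2*(k:ℝ)+1 : ℝ):ℂ) - -μ‖ :=
      norm_sub_norm_le _ _
    have h2 : ((2*(k:ℝ)+1 : ℝ):ℂ) - -μ = μ + 2*((k:ℂ)+1) - 1 := by push_cast; ring
    rw [h2] at h1
    have h3 : ‖((2*(k:ℝ)+1 : ℝ):ℂ)‖ = 2*(k:ℝ)+1 := by
      rw [Complex.norm_real]; exact abs_of_nonneg (by positivity)
    have h4 : ‖-μ‖ = ‖μ‖ := norm_neg _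
    linarith [h1, h3.symm.le]
  have hgnorm : ‖g‖ ≥ ‖μ + 2*((k:ℂ)+1) - 1‖^2 - ‖ν‖^2 := by
    have h1 : ‖(μ + 2*((k:ℂ)+1) - 1)^2‖ - ‖ν^2‖ ≤ ‖g‖ := norm_sub_norm_le _ _
    simpa [norm_pow] using h1
  have hgbig : ‖g‖ ≥ 2*‖z‖^2 + 1 := by
    have h0 : (0:ℝ) ≤ ‖μ‖ := norm_nonneg _
    have h1 : (0:ℝ) ≤ ‖ν‖ := norm_nonneg _
    have h2 : (0:ℝ) ≤ ‖z‖ := norm_nonneg _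
    have h3 : (0:ℝ) ≤ ‖μ + 2*((k:ℂ)+1) - 1‖ := norm_nonneg _
    nlinarith [hd1, hgnorm, sq_nonneg (‖z‖^2), sq_nonneg (‖ν‖ + 2*‖z‖^2)]
  have hgne : g ≠ 0 := by
    intro h; rw [h] at hgbig; simp at hgbig; nlinarith [sq_nonneg ‖z‖]
  have hstep : f (k+1) = (-z^2 / g) * f k := by
    simp only [hf]
    rw [lommelCoeff_succ, ← hg]
    field_simp
    ring
  rw [hstep]
  have : ‖-z^2/g * f k‖ = (‖z‖^2/‖g‖) * ‖f k‖ := by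
    rw [norm_mul, norm_div, norm_neg, norm_pow]
  rw [this]
  have hdiv : ‖z‖^2/‖g‖ ≤ 1/2 := by
    rw [div_le_iff₀ (by nlinarith [sq_nonneg ‖z‖] : (0:ℝ) < ‖g‖)]
    nlinarith [sq_nonneg ‖z‖]
  calc ‖z‖^2/‖g‖ * ‖f k‖ ≤ 1/2 * ‖f k‖ :=
        mul_le_mul_of_nonneg_right hdiv (norm_nonneg _)
    _ = 1/2 * ‖f k‖ := rfl
open Complex Finset in
private lemma lommels_rec {μ ν z : ℂ} (hz : z ≠ 0)
    (hfac : ∀ m : ℕ, ((μ-2) + 2*((m:ℂ)+1) - 1)^2 - ν^2 ≠ 0) :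
    lommels μ ν z = z^(μ-1) - ((μ-1)^2 - ν^2) * lommels (μ-2) ν z := by
  have hc : (μ-1)^2 - ν^2 ≠ 0 := by
    have := hfac 0; push_cast at this; convert this using 2; ring
  have hfacμ : ∀ m : ℕ, (μ + 2*((m:ℂ)+1) - 1)^2 - ν^2 ≠ 0 := by
    intro m
    have := hfac (m+1); push_cast at this; convert this using 2; ring
  set h : ℕ → ℂ := fun k => (-1:ℂ)^k * z^(2*k) / lommelCoeff μ ν k with hh
  have hsum : Summable h := summable_lommel hfacμ
  set T : ℂ := ∑' k : ℕ, (-1:ℂ)^k * z^(2*k) / lommelCoeff μ ν (k+1) with hT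
  have hkey : ∑' k, h k = 1 - z^2 * T := by
    rw [Summable.tsum_eq_zero_add hsum]
    have h0 : h 0 = 1 := by simp [hh, lommelCoeff]
    have h1 : ∀ k : ℕ, h (k+1) = (-z^2) * ((-1:ℂ)^k * z^(2*k) / lommelCoeff μ ν (k+1)) := by
      intro k
      simp only [hh]
      rw [pow_succ, show 2*(k+1) = 2*k + 2 by ring, pow_add]
      rw [mul_div_assoc, mul_div_assoc]
      ring
    rw [h0, tsum_congr h1, tsum_mul_left, ← hT]
    ring
  have hstep2 : lommels (μ-2) ν z = z^(μ-1) * ((1 - z^2*T) / ((μ-1)^2 - ν^2)) := by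
    unfold lommels
    have e1 : μ - 2 + 1 = μ - 1 := by ring
    rw [e1]
    congr 1
    have e2 : ∀ k : ℕ, (-1:ℂ)^k * z^(2*k) / lommelCoeff (μ-2) ν (k+1)
        = ((-1:ℂ)^k * z^(2*k) / lommelCoeff μ ν k) / ((μ-1)^2 - ν^2) := by
      intro k
      rw [lommelCoeff_succ' (μ-2) ν k, show μ-2+1 = μ-1 by ring, show μ-2+2 = μ by ring,
        div_div, mul_comm (((μ-1)^2 - ν^2)) (lommelCoeff μ ν k), ← div_div]
    rw [tsum_congr e2, tsum_div_const, hkey]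
  rw [hstep2]
  unfold lommels
  rw [← hT, show μ + 1 = (μ-1) + 2 by ring, cpow_add _ _ hz, cpow_two_eq]
  field_simp
  ring
open Complex Finset in
private lemma lommelA_rec {μ ν : ℂ} (hx : μ/2 + ν/2 - 1/2 ≠ 0) (hy : μ/2 - ν/2 - 1/2 ≠ 0) :
    lommelA μ ν = ((μ-1)^2 - ν^2) * lommelA (μ-2) ν := by
  unfold lommelA
  rw [show μ/2 + ν/2 + 1/2 = (μ/2 + ν/2 - 1/2) + 1 by ring,
      show μ/2 - ν/2 + 1/2 = (μ/2 - ν/2 - 1/2) + 1 by ring,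
      Complex.Gamma_add_one _ hx, Complex.Gamma_add_one _ hy,
      show (μ-2)/2 + ν/2 + 1/2 = μ/2 + ν/2 - 1/2 by ring,
      show (μ-2)/2 - ν/2 + 1/2 = μ/2 - ν/2 - 1/2 by ring,
      show μ - 1 = (μ-2-1) + 2 by ring, cpow_add _ _ (two_ne_zero), cpow_two_eq]
  ring

private lemma sin_flip (x : ℂ) : Complex.sin (x - (Real.pi:ℂ)) = - Complex.sin x := by
  have hs : Complex.sin (Real.pi:ℂ) = 0 := by
    rw [← Complex.ofReal_sin, Real.sin_pi]; norm_num
  have hc : Complex.cos (Real.pi:ℂ) = -1 := by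
    rw [← Complex.ofReal_cos, Real.cos_pi]; norm_num
  rw [Complex.sin_sub, hs, hc]; ring

private lemma cos_flip (x : ℂ) : Complex.cos (x - (Real.pi:ℂ)) = - Complex.cos x := by
  have hs : Complex.sin (Real.pi:ℂ) = 0 := by
    rw [← Complex.ofReal_sin, Real.sin_pi]; norm_num
  have hc : Complex.cos (Real.pi:ℂ) = -1 := by
    rw [← Complex.ofReal_cos, Real.cos_pi]; norm_num
  rw [Complex.cos_sub, hs, hc]; ring

open Complex Finset in
private lemma lommelS_rec {μ ν z : ℂ} (hz : z ≠ 0)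
    (hfac : ∀ m : ℕ, ((μ-2) + 2*((m:ℂ)+1) - 1)^2 - ν^2 ≠ 0)
    (hx : μ/2 + ν/2 - 1/2 ≠ 0) (hy : μ/2 - ν/2 - 1/2 ≠ 0) :
    lommelS μ ν z = z^(μ-1) - ((μ-1)^2 - ν^2) * lommelS (μ-2) ν z := by
  unfold lommelS
  rw [lommels_rec hz hfac, lommelA_rec hx hy,
      show (μ-2-ν) * (Real.pi:ℂ) / 2 = (μ-ν) * (Real.pi:ℂ)/2 - (Real.pi:ℂ) by ring,
      sin_flip, cos_flip]
  ring
open Complex Finset in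
private lemma gamma_prod {ν : ℝ} (hν : 0 < ν) (k : ℕ) :
    (4:ℂ)^k * Complex.Gamma ((k:ℂ)+1/2) * Complex.Gamma ((k:ℂ)+(ν:ℂ)+1/2)
      = ((Real.sqrt Real.pi : ℝ):ℂ) * Complex.Gamma ((ν:ℂ)+1/2) * lommelCoeff (ν:ℂ) (ν:ℂ) k := by
  induction k with
  | zero =>
    simp only [Nat.cast_zero, pow_zero, one_mul, lommelCoeff, Finset.range_zero,
      Finset.prod_empty, mul_one, zero_add]
    rw [show ((1:ℂ)/2) = ((1/2 : ℝ):ℂ) by norm_num, Complex.Gamma_ofReal,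
      Real.Gamma_one_half_eq]
  | succ k ih =>
    have hk1 : ((k:ℂ)+1/2) ≠ 0 := by
      rw [show ((k:ℂ)+1/2) = (((k:ℝ)+1/2 : ℝ):ℂ) by push_cast; ring, Complex.ofReal_ne_zero]
      positivity
    have hk2 : ((k:ℂ)+(ν:ℂ)+1/2) ≠ 0 := by
      rw [show ((k:ℂ)+(ν:ℂ)+1/2) = (((k:ℝ)+ν+1/2 : ℝ):ℂ) by push_cast; ring,
        Complex.ofReal_ne_zero]
      positivity
    rw [lommelCoeff_succ,
      show (((k+1:ℕ):ℂ)+1/2) = ((k:ℂ)+1/2)+1 by push_cast; ring,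
      show (((k+1:ℕ):ℂ)+(ν:ℂ)+1/2) = ((k:ℂ)+(ν:ℂ)+1/2)+1 by push_cast; ring,
      Complex.Gamma_add_one _ hk1, Complex.Gamma_add_one _ hk2, pow_succ]
    linear_combination (4*((k:ℂ)+1/2)*((k:ℂ)+(ν:ℂ)+1/2)) * ih
open Complex Finset in
private lemma gammaNeZeroRePos {s : ℂ} (hs : 0 < s.re) : Complex.Gamma s ≠ 0 := by
  apply Complex.Gamma_ne_zero
  intro m h
  rw [h] at hs
  simp only [Complex.neg_re, Complex.natCast_re] at hs
  have : (0:ℝ) ≤ (m:ℝ) := Nat.cast_nonneg m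
  linarith

open Complex Finset in
private lemma lommelCoeff_self_ne {ν : ℝ} (hν : 0 < ν) (k : ℕ) :
    lommelCoeff (ν:ℂ) (ν:ℂ) k ≠ 0 := by
  refine Finset.prod_ne_zero_iff.2 fun m _ => ?_
  rw [show ((ν:ℂ) + 2*((m:ℂ)+1) - 1)^2 - (ν:ℂ)^2
      = (((2*(m:ℝ)+1)*(2*ν+2*(m:ℝ)+1) : ℝ) : ℂ) by push_cast; ring,
    Complex.ofReal_ne_zero]
  positivity

open Complex Finset in
private lemma struveH_eq {ν : ℝ} (hν : 0 < ν) {z : ℂ} (hz : z ≠ 0) :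
    struveH (ν:ℂ) z = (2:ℂ)^((1:ℂ)-(ν:ℂ)) / (((Real.sqrt Real.pi : ℝ):ℂ) *
      Complex.Gamma ((ν:ℂ)+1/2)) * lommels (ν:ℂ) (ν:ℂ) z := by
  rw [struveH, lommels, ← tsum_mul_left, ← tsum_mul_left, ← tsum_mul_left]
  refine tsum_congr fun k => ?_
  have key := gamma_prod hν (k+1)
  rw [show (((k+1:ℕ):ℂ)+1/2) = ((k:ℂ)+3/2) by push_cast; ring,
    show (((k+1:ℕ):ℂ)+(ν:ℂ)+1/2) = ((k:ℂ)+(ν:ℂ)+3/2) by push_cast; ring] at key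
  have hga : Complex.Gamma ((k:ℂ)+3/2) ≠ 0 := by
    apply gammaNeZeroRePos; simp; positivity
  have hgb : Complex.Gamma ((k:ℂ)+(ν:ℂ)+3/2) ≠ 0 := by
    apply gammaNeZeroRePos; simp; positivity
  have hgn : Complex.Gamma ((ν:ℂ)+1/2) ≠ 0 := by
    apply gammaNeZeroRePos; simp; positivity
  have hsq : ((Real.sqrt Real.pi : ℝ):ℂ) ≠ 0 := by
    rw [Complex.ofReal_ne_zero]; positivity
  have hA := lommelCoeff_self_ne hν (k+1)
  have h2p : (2:ℂ)^((ν:ℂ)+1) ≠ 0 := by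
    intro h
    exact two_ne_zero (Complex.cpow_eq_zero_iff _ _ |>.1 h).1
  have h24 : (2:ℂ)^((ν:ℂ)+1) * (2:ℂ)^((1:ℂ)-(ν:ℂ)) = 4 := by
    rw [← cpow_add _ _ two_ne_zero, show ((ν:ℂ)+1)+((1:ℂ)-(ν:ℂ)) = 2 by ring, cpow_two_eq]
    norm_num
  rw [div_two_cpow hz, div_pow]
  have h2k : (2:ℂ)^(2*k) ≠ 0 := pow_ne_zero _ two_ne_zero
  have h4k : (4:ℂ)^(k+1) = 4 * (2:ℂ)^(2*k) := by
    rw [pow_succ, show (4:ℂ) = 2^2 by norm_num, ← pow_mul]; ring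
  rw [h4k] at key
  set Ga := Complex.Gamma ((k:ℂ)+3/2) with hGa
  set Gb := Complex.Gamma ((k:ℂ)+(ν:ℂ)+3/2) with hGb
  set Gn := Complex.Gamma ((ν:ℂ)+1/2) with hGn
  set L := lommelCoeff (ν:ℂ) (ν:ℂ) (k+1) with hL
  set sq := ((Real.sqrt Real.pi : ℝ):ℂ) with hsq2
  set p := (2:ℂ)^((ν:ℂ)+1) with hp
  set q := (2:ℂ)^((1:ℂ)-(ν:ℂ)) with hq
  set Z := z^((ν:ℂ)+1) with hZ
  field_simp
  linear_combination (-Z)*key - (Z*Ga*Gb*(2:ℂ)^(2*k))*h24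
noncomputable def Ccoef (ν : ℝ) (n : ℕ) : ℂ :=
  (2:ℂ)^((1:ℂ) - (ν:ℂ) + 2*(n:ℂ)) * Complex.Gamma ((n:ℂ) + 1/2) /
    ((Real.pi:ℂ) * Complex.Gamma ((ν:ℂ) - (n:ℂ) + 1/2))

open Complex Finset in
private lemma base_case {ν : ℝ} (hν : 0 < ν) {z : ℂ} (hz : z ≠ 0) :
    struveK (ν:ℂ) z = Ccoef ν 0 * lommelS (ν:ℂ) (ν:ℂ) z := by
  have hgn : Complex.Gamma ((ν:ℂ)+1/2) ≠ 0 := by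
    apply gammaNeZeroRePos; simp; positivity
  have hsq : ((Real.sqrt Real.pi : ℝ):ℂ) ≠ 0 := by
    rw [Complex.ofReal_ne_zero]; positivity
  have hππ : ((Real.pi : ℝ):ℂ) = ((Real.sqrt Real.pi : ℝ):ℂ) * ((Real.sqrt Real.pi : ℝ):ℂ) := by
    rw [← Complex.ofReal_mul, Real.mul_self_sqrt Real.pi_pos.le]
  have hA : lommelA (ν:ℂ) (ν:ℂ)
      = (2:ℂ)^((ν:ℂ)-1) * Complex.Gamma ((ν:ℂ)+1/2) * ((Real.sqrt Real.pi : ℝ):ℂ) := by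
    unfold lommelA
    rw [show (ν:ℂ)/2+(ν:ℂ)/2+1/2 = (ν:ℂ)+1/2 by ring,
      show (ν:ℂ)/2-(ν:ℂ)/2+1/2 = ((1/2:ℝ):ℂ) by push_cast; ring,
      Complex.Gamma_ofReal, Real.Gamma_one_half_eq]
  have h2m : (2:ℂ)^((1:ℂ)-(ν:ℂ)) * (2:ℂ)^((ν:ℂ)-1) = 1 := by
    rw [← cpow_add _ _ two_ne_zero, show (1:ℂ)-(ν:ℂ)+((ν:ℂ)-1) = 0 by ring, cpow_zero]
  unfold struveK lommelS Ccoef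
  rw [struveH_eq hν hz]
  simp only [Nat.cast_zero, mul_zero, add_zero, sub_zero, zero_add, sub_self, zero_mul,
    zero_div, Complex.sin_zero, Complex.cos_zero]
  rw [hA, hππ, show Complex.Gamma ((1:ℂ)/2) = ((Real.sqrt Real.pi : ℝ):ℂ) by
    rw [show ((1:ℂ)/2) = ((1/2:ℝ):ℂ) by norm_num, Complex.Gamma_ofReal, Real.Gamma_one_half_eq]]
  set G := Complex.Gamma ((ν:ℂ)+1/2) with hG
  set s := ((Real.sqrt Real.pi : ℝ):ℂ) with hs
  set u := (2:ℂ)^((1:ℂ)-(ν:ℂ)) with hu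
  set v := (2:ℂ)^((ν:ℂ)-1) with hv
  set L := lommels (ν:ℂ) (ν:ℂ) z with hL
  set Y := besselY (ν:ℂ) z with hY
  set J := besselJ (ν:ℂ) z with hJ
  field_simp
  linear_combination (s*G*Y) * h2m
open Complex Finset in
private lemma step_case {ν : ℝ} (hν : 0 < ν) {z : ℂ} (hz : z ≠ 0) (n : ℕ)
    (hn : ((n:ℝ)+1) ≤ ν/2 + 1/2) :
    Ccoef ν n * lommelS ((ν:ℂ)-2*(n:ℂ)) (ν:ℂ) z
      = Ccoef ν (n+1) * lommelS ((ν:ℂ)-2*((n:ℂ)+1)) (ν:ℂ) z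
        + Ccoef ν n * z^((ν:ℂ)-2*(n:ℂ)-1) := by
  have hν2n : 2*(n:ℝ) + 1 ≤ ν := by linarith
  set μ : ℂ := (ν:ℂ) - 2*(n:ℂ) with hμ
  have hfac : ∀ m : ℕ, ((μ-2) + 2*((m:ℂ)+1) - 1)^2 - (ν:ℂ)^2 ≠ 0 := by
    intro m
    rw [show ((μ-2) + 2*((m:ℂ)+1) - 1)^2 - (ν:ℂ)^2
        = (((2*(m:ℝ)-2*(n:ℝ)-1) * (2*ν+2*(m:ℝ)-2*(n:ℝ)-1) : ℝ):ℂ) by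
      rw [hμ]; push_cast; ring, Complex.ofReal_ne_zero]
    apply mul_ne_zero
    · rcases le_or_gt m n with h | h
      · have : (m:ℝ) ≤ (n:ℝ) := by exact_mod_cast h
        nlinarith
      · have : (n:ℝ)+1 ≤ (m:ℝ) := by exact_mod_cast h
        nlinarith
    · have : (0:ℝ) ≤ (m:ℝ) := Nat.cast_nonneg m
      nlinarith
  have hx : μ/2 + (ν:ℂ)/2 - 1/2 ≠ 0 := by
    rw [show μ/2 + (ν:ℂ)/2 - 1/2 = ((ν - (n:ℝ) - 1/2 : ℝ):ℂ) by rw [hμ]; push_cast; ring,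
      Complex.ofReal_ne_zero]
    nlinarith
  have hy : μ/2 - (ν:ℂ)/2 - 1/2 ≠ 0 := by
    rw [show μ/2 - (ν:ℂ)/2 - 1/2 = ((-(n:ℝ) - 1/2 : ℝ):ℂ) by rw [hμ]; push_cast; ring,
      Complex.ofReal_ne_zero]
    have : (0:ℝ) ≤ (n:ℝ) := Nat.cast_nonneg n
    intro h; nlinarith [h]
  have hCrec : Ccoef ν (n+1) = -Ccoef ν n * ((μ-1)^2 - (ν:ℂ)^2) := by
    unfold Ccoef
    have hk1 : ((n:ℂ)+1/2) ≠ 0 := by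
      rw [show ((n:ℂ)+1/2) = (((n:ℝ)+1/2 : ℝ):ℂ) by push_cast; ring, Complex.ofReal_ne_zero]
      positivity
    have hd1 : ((ν:ℂ)-(n:ℂ)-1/2) ≠ 0 := by
      rw [show ((ν:ℂ)-(n:ℂ)-1/2) = ((ν-(n:ℝ)-1/2 : ℝ):ℂ) by push_cast; ring,
        Complex.ofReal_ne_zero]
      nlinarith
    have hgd : Complex.Gamma ((ν:ℂ)-(n:ℂ)-1/2) ≠ 0 := by
      apply gammaNeZeroRePos; simp; nlinarith
    have hπ : ((Real.pi : ℝ):ℂ) ≠ 0 := Complex.ofReal_ne_zero.2 Real.pi_ne_zero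
    rw [show (((n+1:ℕ):ℂ)+1/2) = ((n:ℂ)+1/2)+1 by push_cast; ring,
      show ((ν:ℂ)-((n+1:ℕ):ℂ)+1/2) = ((ν:ℂ)-(n:ℂ)-1/2) by push_cast; ring,
      show ((ν:ℂ)-(n:ℂ)+1/2) = ((ν:ℂ)-(n:ℂ)-1/2)+1 by ring,
      Complex.Gamma_add_one _ hk1, Complex.Gamma_add_one _ hd1,
      show ((1:ℂ)-(ν:ℂ)+2*((n+1:ℕ):ℂ)) = ((1:ℂ)-(ν:ℂ)+2*(n:ℂ))+2 by push_cast; ring,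
      cpow_add _ _ (two_ne_zero), cpow_two_eq]
    rw [show (μ-1)^2 - ((ν:ℂ))^2 = -(4*((n:ℂ)+1/2)*((ν:ℂ)-(n:ℂ)-1/2)) by rw [hμ]; ring]
    set D := (ν:ℂ)-(n:ℂ)-1/2 with hDdef
    set Gd := Complex.Gamma D with hGd
    set Gn2 := Complex.Gamma ((n:ℂ)+1/2) with hGn2
    set p := (2:ℂ)^((1:ℂ)-(ν:ℂ)+2*(n:ℂ)) with hp
    field_simp
    ring
  rw [lommelS_rec hz hfac hx hy, hCrec, show μ - 2 = (ν:ℂ)-2*((n:ℂ)+1) by rw [hμ]; try ring,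
    show μ - 1 = (ν:ℂ)-2*(n:ℂ)-1 by rw [hμ]; try ring]
  ring
open Complex Finset in
private lemma main_ind {ν : ℝ} (hν : 0 < ν) {z : ℂ} (hz : z ≠ 0) :
    ∀ n : ℕ, ((n:ℝ) ≤ ν/2 + 1/2) →
    struveK (ν:ℂ) z = Ccoef ν n * lommelS ((ν:ℂ)-2*(n:ℂ)) (ν:ℂ) z
      + (1/(Real.pi:ℂ)) * ∑ k ∈ Finset.range n,
          Complex.Gamma ((k:ℂ)+1/2) * (z/2)^((ν:ℂ)-2*(k:ℂ)-1) /
            Complex.Gamma ((ν:ℂ)+1/2-(k:ℂ)) := by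
  intro n
  induction n with
  | zero =>
    intro _
    simpa using base_case hν hz
  | succ n ih =>
    intro hn1
    have hnr : ((n:ℝ)+1) ≤ ν/2 + 1/2 := by push_cast at hn1; linarith
    have hn : (n:ℝ) ≤ ν/2 + 1/2 := by linarith
    rw [ih hn, show ((ν:ℂ)-2*((n+1:ℕ):ℂ)) = ((ν:ℂ)-2*((n:ℂ)+1)) by push_cast; ring,
      Finset.sum_range_succ, step_case hν hz n hnr]
    have hterm : Ccoef ν n * z^((ν:ℂ)-2*(n:ℂ)-1)
        = (1/(Real.pi:ℂ)) * (Complex.Gamma ((n:ℂ)+1/2) * (z/2)^((ν:ℂ)-2*(n:ℂ)-1) /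
            Complex.Gamma ((ν:ℂ)+1/2-(n:ℂ))) := by
      rw [div_two_cpow hz]
      unfold Ccoef
      rw [show ((ν:ℂ)+1/2-(n:ℂ)) = ((ν:ℂ)-(n:ℂ)+1/2) by ring]
      have h2m : (2:ℂ)^((1:ℂ)-(ν:ℂ)+2*(n:ℂ)) * (2:ℂ)^((ν:ℂ)-2*(n:ℂ)-1) = 1 := by
        rw [← cpow_add _ _ two_ne_zero,
          show ((1:ℂ)-(ν:ℂ)+2*(n:ℂ))+((ν:ℂ)-2*(n:ℂ)-1) = 0 by ring, cpow_zero]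
      have hπ : ((Real.pi : ℝ):ℂ) ≠ 0 := Complex.ofReal_ne_zero.2 Real.pi_ne_zero
      have hgd : Complex.Gamma ((ν:ℂ)-(n:ℂ)+1/2) ≠ 0 := by
        apply gammaNeZeroRePos; simp; nlinarith
      have h2z : (2:ℂ)^((ν:ℂ)-2*(n:ℂ)-1) ≠ 0 := by
        intro h
        exact two_ne_zero (Complex.cpow_eq_zero_iff _ _ |>.1 h).1
      set p := (2:ℂ)^((1:ℂ)-(ν:ℂ)+2*(n:ℂ)) with hp
      set q := (2:ℂ)^((ν:ℂ)-2*(n:ℂ)-1) with hq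
      set Zp := z^((ν:ℂ)-2*(n:ℂ)-1) with hZ
      set Gn := Complex.Gamma ((n:ℂ)+1/2) with hGn
      set Gd := Complex.Gamma ((ν:ℂ)-(n:ℂ)+1/2) with hGd
      field_simp
      linear_combination (Zp*Gn) * h2m
    rw [hterm]
    ring

/-- For real noninteger `ν > 0`, with `k_ν = ⌊ν/2 - 1/2⌋` and `μ̃ = ν - 2k_ν - 2`:
`𝐊_ν(z) = B(μ̃,ν) S_{μ̃,ν}(z) + p_ν(z)` on the cut plane. -/
theorem struveK_eq_lommelS (ν : ℝ) (hν : 0 < ν) (hint : ∀ n : ℤ, ν ≠ (n : ℝ)) :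
    ∀ z ∈ Complex.slitPlane,
      struveK (ν : ℂ) z = Bcoef ν * lommelS ((muTilde ν : ℝ) : ℂ) (ν : ℂ) z + pStruve ν z := by
  intro z hzs
  have hz : z ≠ 0 := Complex.slitPlane_ne_zero hzs
  set n : ℕ := (kIdx ν + 1).toNat with hn
  have hk0 : (0:ℤ) ≤ kIdx ν + 1 := by
    have : (-1:ℤ) ≤ kIdx ν := by
      rw [kIdx, Int.le_floor]
      push_cast
      linarith
    linarith
  have hcast : ((n:ℕ):ℤ) = kIdx ν + 1 := Int.toNat_of_nonneg hk0
  have hreal : (n:ℝ) = (kIdx ν : ℝ) + 1 := by exact_mod_cast congrArg (Int.cast : ℤ → ℝ) hcast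
  have hfl : (kIdx ν : ℝ) ≤ ν/2 - 1/2 := Int.floor_le _
  have hnle : (n:ℝ) ≤ ν/2 + 1/2 := by rw [hreal]; linarith
  have hmuR : muTilde ν = ν - 2*(n:ℝ) := by
    rw [muTilde, hreal]; ring
  have hmu : ((muTilde ν : ℝ):ℂ) = (ν:ℂ) - 2*(n:ℂ) := by
    rw [hmuR]; push_cast; ring
  have hB : Bcoef ν = Ccoef ν n := by
    rw [Bcoef, Ccoef, hmu,
      show (1:ℂ) - ((ν:ℂ) - 2*(n:ℂ)) = (1:ℂ) - (ν:ℂ) + 2*(n:ℂ) by ring,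
      show (ν:ℂ)/2 - ((ν:ℂ) - 2*(n:ℂ))/2 + 1/2 = (n:ℂ) + 1/2 by ring,
      show (ν:ℂ)/2 + ((ν:ℂ) - 2*(n:ℂ))/2 + 1/2 = (ν:ℂ) - (n:ℂ) + 1/2 by ring]
  have hp : pStruve ν z = (1/(Real.pi:ℂ)) * ∑ k ∈ Finset.range n,
      Complex.Gamma ((k:ℂ)+1/2) * (z/2)^((ν:ℂ)-2*(k:ℂ)-1) /
        Complex.Gamma ((ν:ℂ)+1/2-(k:ℂ)) := by
    rw [pStruve, hn]
  rw [hB, hmu, hp]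
  exact main_ind hν hz n hnle
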